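/- Relative monotonicity for visible choice: let C₁ : X×Y₁ → ℝ and C₂ : X×Y₂ → ℝ be compatible channels, π a prior on X, g a gain function, and p ∈ (0,1]. Then V_g[π,C₁] ≤ V_g[π,C₂] if and only if for every channel C compatible with C₁ and C₂, V_g[π, C₁ ⊞_p C] ≤ V_g[π, C₂ ⊞_p C]. -/

import Mathlib

open Finset

/-- A channel with input set `X` and output set `Y`: entries are nonnegative
and each row sums to `1`. -/
def IsChannel {X Y : Type*} [Fintype Y] (C : X → Y → ℝ) : Prop :=
  (∀ x y, 0 ≤ C x y) ∧ ∀ x, ∑ y, C x y = 1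

/-- A channel with input set `X` whose output set is the finset `S` of a common
ambient type `Ω`: entries are nonnegative, each row sums to `1` over `S`, and
entries vanish outside `S`. -/
def IsChannelOn {X Ω : Type*} (S : Finset Ω) (C : X → Ω → ℝ) : Prop :=
  (∀ x y, 0 ≤ C x y) ∧ (∀ x, ∑ y ∈ S, C x y = 1) ∧ ∀ x y, y ∉ S → C x y = 0

/-- Parallel composition `C₁ ∥ C₂`. -/
def par {X Y₁ Y₂ : Type*} (C₁ : X → Y₁ → ℝ) (C₂ : X → Y₂ → ℝ) : X → Y₁ × Y₂ → ℝ :=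
  fun x y => C₁ x y.1 * C₂ x y.2

/-- Visible choice `C₁ ⊞_p C₂`, on the disjoint union of the output sets. -/
def vis {X Y₁ Y₂ : Type*} (p : ℝ) (C₁ : X → Y₁ → ℝ) (C₂ : X → Y₂ → ℝ) : X → Y₁ ⊕ Y₂ → ℝ :=
  fun x => Sum.elim (fun y => p * C₁ x y) (fun y => (1 - p) * C₂ x y)

/-- Hidden choice `C₁ ⊕_p C₂` for channels whose output sets lie in a common
ambient type (pointwise convex combination; this agrees with the case analysis
on `Y₁ ∩ Y₂`, `Y₁ \ Y₂`, `Y₂ \ Y₁` since channels vanish outside their output sets). -/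
def hid {X Ω : Type*} (p : ℝ) (C₁ C₂ : X → Ω → ℝ) : X → Ω → ℝ :=
  fun x y => p * C₁ x y + (1 - p) * C₂ x y

/-- Equality up to a permutation of the output set, `C₁ ≐ C₂`. -/
def PermEq {X Y₁ Y₂ : Type*} (C₁ : X → Y₁ → ℝ) (C₂ : X → Y₂ → ℝ) : Prop :=
  ∃ ψ : Y₁ ≃ Y₂, ∀ x y, C₁ x y = C₂ x (ψ y)

/-- Cascading `CD` of channels. -/
def cascade {X Y Z : Type*} [Fintype Y] (C : X → Y → ℝ) (D : Y → Z → ℝ) : X → Z → ℝ :=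
  fun x z => ∑ y, C x y * D y z

/-- `Refines C₁ C₂` (written `C₁ ⊑ C₂`): there is a channel `D` with `C₁D = C₂`. -/
def Refines {X Y₁ Y₂ : Type*} [Fintype Y₁] [Fintype Y₂] (C₁ : X → Y₁ → ℝ)
    (C₂ : X → Y₂ → ℝ) : Prop :=
  ∃ D : Y₁ → Y₂ → ℝ, IsChannel D ∧ cascade C₁ D = C₂

/-- Equivalence of channels: mutual refinement. -/
def EquivCh {X Y₁ Y₂ : Type*} [Fintype Y₁] [Fintype Y₂] (C₁ : X → Y₁ → ℝ)
    (C₂ : X → Y₂ → ℝ) : Prop :=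
  Refines C₁ C₂ ∧ Refines C₂ C₁

/-- A prior: a probability distribution on the finite input set `X`. -/
def IsPrior {X : Type*} [Fintype X] (π : X → ℝ) : Prop :=
  (∀ x, 0 ≤ π x) ∧ ∑ x, π x = 1

/-- A gain function `g : W × X → [0,1]`. -/
def IsGain {W X : Type*} (g : W → X → ℝ) : Prop :=
  ∀ w x, 0 ≤ g w x ∧ g w x ≤ 1

/-- Posterior g-vulnerability `V_g[π, C]`. -/
noncomputable def postV {W X Y : Type*} [Fintype W] [Nonempty W] [Fintype X] [Fintype Y]
    (π : X → ℝ) (g : W → X → ℝ) (C : X → Y → ℝ) : ℝ :=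
  ∑ y, univ.sup' univ_nonempty fun w => ∑ x, C x y * π x * g w x

/-!
The posterior vulnerability of `C₁ ⊞_p C` is `p · V_g[π, C₁]` plus a term depending only on
`C`, so for `p > 0` comparing the visible choices is comparing `V_g[π, C₁]` and `V_g[π, C₂]`;
for the converse any single channel `C` (e.g. the constant one) suffices.
-/

section postV

variable {W X : Type*} [Fintype W] [Nonempty W] [Fintype X] (π : X → ℝ) (g : W → X → ℝ)

theorem postV_sumElim {Y₁ Y₂ : Type*} [Fintype Y₁] [Fintype Y₂]
    (C₁ : X → Y₁ → ℝ) (C₂ : X → Y₂ → ℝ) :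
    postV π g (fun x => Sum.elim (C₁ x) (C₂ x)) = postV π g C₁ + postV π g C₂ :=
  Fintype.sum_sum_type _

theorem postV_const_mul {Y : Type*} [Fintype Y] (C : X → Y → ℝ) {c : ℝ} (hc : 0 ≤ c) :
    postV π g (fun x y => c * C x y) = c * postV π g C := by
  simp only [postV, Finset.mul_sum, Finset.mul₀_sup' hc, mul_assoc]

theorem postV_vis {Y₁ Y₂ : Type*} [Fintype Y₁] [Fintype Y₂]
    (C₁ : X → Y₁ → ℝ) (C₂ : X → Y₂ → ℝ) {p : ℝ} (hp : 0 ≤ p) :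
    postV π g (vis p C₁ C₂) = p * postV π g C₁ + postV π g (fun x y => (1 - p) * C₂ x y) := by
  unfold vis
  rw [postV_sumElim, postV_const_mul π g C₁ hp]

end postV

theorem relative_monotonicity_visible_choice {W X Y₁ Y₂ : Type*}
    [Fintype W] [Nonempty W] [Fintype X] [Fintype Y₁] [Fintype Y₂]
    (C₁ : X → Y₁ → ℝ) (C₂ : X → Y₂ → ℝ)
    (π : X → ℝ) (g : W → X → ℝ)
    (p : ℝ) (hp0 : 0 < p) :
    postV π g C₁ ≤ postV π g C₂ ↔
      ∀ (Z : Type) [Fintype Z] (C : X → Z → ℝ), IsChannel C →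
        postV π g (vis p C₁ C) ≤ postV π g (vis p C₂ C) := by
  simp only [postV_vis π g _ _ hp0.le, add_le_add_iff_right]
  constructor
  · intro h _ _ _ _
    exact mul_le_mul_of_nonneg_left h hp0.le
  · intro h
    have hconst : IsChannel fun (_ : X) (_ : Unit) => (1 : ℝ) :=
      ⟨fun _ _ => zero_le_one, fun _ => by simp⟩
    exact le_of_mul_le_mul_left (h Unit _ hconst) hp0
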